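/- Let λ, μ be partitions of length m such that |μ| − |λ| = 2k with k ∈ ℕ, set n = max(λ_1, μ_1), λ̂ = (n−λ_m, …, n−λ_1) and μ̂ = (n−μ_m, …, n−μ_1). Then u_{λ,μ}(q) = Σ_{δ∈D_k^m} c_δ^{D_m} q^k K^{A_m}_{λ̂, μ̂+δ}(q) and U_{λ,μ}(q) = Σ_{δ∈C_k^m} c_δ^{C_m} q^k K^{A_m}_{λ̂, μ̂+δ}(q). -/

import Mathlib

open scoped BigOperators

noncomputable section

/-- Integral weights of rank `m`, identified with `ℤ^m`. -/
abbrev Wt (m : ℕ) := Fin m → ℤ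

/-- Rational weights of rank `m` (needed for the half-integral `ρ` of type `B`). -/
abbrev QWt (m : ℕ) := Fin m → ℚ

/-- Coercion of an integral weight to a rational weight. -/
def castWt {m : ℕ} (β : Wt m) : QWt m := fun i => (β i : ℚ)

/-- The standard basis vector `ε_i` of `ℤ^m`. -/
def eps {m : ℕ} (i : Fin m) : Wt m := fun j => if j = i then 1 else 0

/-- `ρ_m = (m, m-1, ..., 1)`. -/
def rhoZ (m : ℕ) : Wt m := fun i => (m : ℤ) - (i : ℕ)

/-- `κ_m = (1, ..., 1)`. -/
def kappa (m : ℕ) : Wt m := fun _ => 1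

/-- A partition of length `m`: a weakly decreasing element of `ℕ^m` (written in `ℤ^m`). -/
def IsPart {m : ℕ} (lam : Wt m) : Prop := Antitone lam ∧ ∀ i, 0 ≤ lam i

/-- `|λ| = λ_1 + ⋯ + λ_m`. -/
def wtSum {m : ℕ} (lam : Wt m) : ℤ := ∑ i, lam i

/-- The conjugate partition, regarded as a partition of length `n`:
`λ'_j = #{i : λ_i ≥ j}` (with `j` one-based). -/
def conj {m : ℕ} (n : ℕ) (lam : Wt m) : Wt n :=
  fun j => ((Finset.univ.filter (fun i : Fin m => ((j : ℕ) : ℤ) < lam i)).card : ℤ)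

/-- The permutation action of `S_m` on `ℤ^m`. -/
def pact {m : ℕ} (σ : Equiv.Perm (Fin m)) (β : Wt m) : Wt m := β ∘ σ.symm

/-- The permutation action of `S_m` on `ℚ^m`. -/
def qpact {m : ℕ} (σ : Equiv.Perm (Fin m)) (β : QWt m) : QWt m := β ∘ σ.symm

/-- The dot action `σ ∘ α = σ(α + ρ_m) - ρ_m`. -/
def dotAct {m : ℕ} (σ : Equiv.Perm (Fin m)) (α : Wt m) : Wt m :=
  pact σ (α + rhoZ m) - rhoZ m

/-- The three root-system types considered in the paper. -/
inductive RT | B | C | D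
deriving DecidableEq

/-- The action of a signed permutation `(σ, ε)` on `ℚ^m`: the hyperoctahedral group
`W_{B_m} = W_{C_m}` consists of all such pairs. -/
def sact {m : ℕ} (σ : Equiv.Perm (Fin m)) (ε : Fin m → Bool) (β : QWt m) : QWt m :=
  fun i => (if ε i then -1 else 1) * β (σ.symm i)

/-- `(-1)^{l(w)}` for a signed permutation `w = (σ, ε)`: the sign character of the
hyperoctahedral group, which takes value `-1` on each Coxeter generator. -/
def ssign {m : ℕ} (σ : Equiv.Perm (Fin m)) (ε : Fin m → Bool) : ℤ :=
  (Equiv.Perm.sign σ : ℤ) * ∏ i, (if ε i then -1 else 1)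

/-- Which signed permutations belong to the Weyl group of type `g`: for `B` and `C` all of
them, for `D` only those changing an even number of signs. -/
def allowed (g : RT) {m : ℕ} (ε : Fin m → Bool) : Prop :=
  g = RT.D → (∏ i, (if ε i then (-1 : ℤ) else 1)) = 1

instance (g : RT) {m : ℕ} : DecidablePred (allowed g (m := m)) := by
  unfold allowed; infer_instance

/-- The Laurent polynomial ring `ℤ[x_1^{±1/2}, ..., x_m^{±1/2}]` (allowing all rational
exponents), realized as the group algebra of `ℚ^m`. -/
abbrev LQ (m : ℕ) := AddMonoidAlgebra ℤ (QWt m)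

/-- The monomial `x^β`. -/
def XQ {m : ℕ} (β : QWt m) : LQ m := AddMonoidAlgebra.single β 1

instance {m : ℕ} : IsDomain (LQ m) := NoZeroDivisors.to_isDomain _

/-- The fraction field of the Laurent polynomial ring, in which Schur functions live. -/
abbrev KK (m : ℕ) := FractionRing (LQ m)

def toK {m : ℕ} (p : LQ m) : KK m := algebraMap (LQ m) (KK m) p

/-- The half-sum of positive roots: `ρ_B = ρ_m - (1/2,…,1/2)`, `ρ_C = ρ_m`,
`ρ_D = ρ_m - (1,…,1)`. -/
def rhoG (g : RT) (m : ℕ) : QWt m :=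
  match g with
  | RT.B => fun i => ((m : ℚ) - (i : ℕ)) - 1/2
  | RT.C => fun i => (m : ℚ) - (i : ℕ)
  | RT.D => fun i => ((m : ℚ) - (i : ℕ)) - 1

/-- `a_β = Σ_{w ∈ W_g} (-1)^{l(w)} x^{w(β)}`. -/
def aalt (g : RT) {m : ℕ} (β : QWt m) : LQ m :=
  ∑ σ : Equiv.Perm (Fin m), ∑ ε ∈ Finset.univ.filter (allowed g),
    ssign σ ε • XQ (sact σ ε β)

/-- The Schur function `s_ν^g = a_{ν+ρ_g} / a_{ρ_g}`. -/
def SchurF (g : RT) {m : ℕ} (ν : QWt m) : KK m :=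
  toK (aalt g (ν + rhoG g m)) / toK (aalt g (rhoG g m))

/-- The one-row weight `(k, 0, …, 0)`. -/
def rowWt (m : ℕ) (k : ℤ) : QWt m := fun i => if (i : ℕ) = 0 then (k : ℚ) else 0

/-- The one-column weight `(1^p, 0^{m-p})`. -/
def colWt (m : ℕ) (p : ℤ) : QWt m := fun i => if ((i : ℕ) : ℤ) < p then 1 else 0

/-- `h_k^g = s_{(k,0,…,0)}^g` for `k ≥ 0`, and `0` for `k < 0`. -/
def hF (g : RT) (m : ℕ) (k : ℤ) : KK m := if 0 ≤ k then SchurF g (rowWt m k) else 0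

/-- `H_k^g = h_k^g + h_{k-2}^g + ⋯ + h_{k mod 2}^g` for `k ≥ 0`, and `0` for `k < 0`. -/
def HF (g : RT) (m : ℕ) (k : ℤ) : KK m :=
  if 0 ≤ k then ∑ j ∈ Finset.range (k.toNat / 2 + 1), hF g m (k - 2 * j) else 0

/-- `e_p^g = s^g_{(1^p,0^{m-p})}` for `0 ≤ p ≤ m`, `e_p^g = e^g_{2m-p}` for `m < p ≤ 2m`,
and `0` otherwise. -/
def eF (g : RT) (m : ℕ) (p : ℤ) : KK m :=
  if 0 ≤ p ∧ p ≤ (m : ℤ) then SchurF g (colWt m p)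
  else if (m : ℤ) < p ∧ p ≤ 2 * m then SchurF g (colWt m (2 * m - p))
  else 0

/-- `E_k^g = e_k^g + e_{k-2}^g + ⋯ + e_{k mod 2}^g` for `k ≥ 0`, and `0` for `k < 0`. -/
def EF (g : RT) (m : ℕ) (k : ℤ) : KK m :=
  if 0 ≤ k then ∑ j ∈ Finset.range (k.toNat / 2 + 1), eF g m (k - 2 * j) else 0

/-- The `m × m` determinant `u_α^g` (in the one-row characters `h^g`). -/
def uDet (g : RT) {m : ℕ} (α : Wt m) : KK m :=
  Matrix.det (Matrix.of fun i j : Fin m =>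
    if (j : ℕ) = 0 then hF g m (α i - (i : ℕ))
    else hF g m (α i - (i : ℕ) + (j : ℕ)) + hF g m (α i - (i : ℕ) - (j : ℕ)))

/-- The `n × n` determinant `v_β^g` (in the one-column characters `e^g` of rank `m`). -/
def vDet (g : RT) (m : ℕ) {n : ℕ} (β : Wt n) : KK m :=
  Matrix.det (Matrix.of fun i j : Fin n =>
    if (j : ℕ) = 0 then eF g m (β i - (i : ℕ))
    else eF g m (β i - (i : ℕ) + (j : ℕ)) + eF g m (β i - (i : ℕ) - (j : ℕ)))

/-- `h_α^g = h^g_{α_1} ⋯ h^g_{α_m}` (and similarly for arbitrary index length). -/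
def hProd (g : RT) (m : ℕ) {n : ℕ} (α : Wt n) : KK m := ∏ i, hF g m (α i)

def HProd (g : RT) (m : ℕ) {n : ℕ} (α : Wt n) : KK m := ∏ i, HF g m (α i)

def eProd (g : RT) (m : ℕ) {n : ℕ} (α : Wt n) : KK m := ∏ i, eF g m (α i)

def EProd (g : RT) (m : ℕ) {n : ℕ} (α : Wt n) : KK m := ∏ i, EF g m (α i)

/-- The Laurent polynomial ring `ℤ[x_1^{±1}, ..., x_m^{±1}]`, realized as the group
algebra of `ℤ^m`. -/
abbrev LZ (m : ℕ) := AddMonoidAlgebra ℤ (Wt m)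

/-- The monomial `x^β`. -/
def XZ {m : ℕ} (β : Wt m) : LZ m := AddMonoidAlgebra.single β 1

/-- `φ_m = ∏_{1≤i<j≤m} (1 - x_i/x_j) · ∏_{1≤r<s≤m} (1 - 1/(x_r x_s))`; its coefficients
are the function `a` (resp. `f_{q=1}` up to expansion conventions). -/
def phiSmall (m : ℕ) : LZ m :=
  (∏ p ∈ Finset.univ.filter (fun p : Fin m × Fin m => p.1 < p.2),
      (1 - XZ (eps p.1 - eps p.2))) *
  (∏ p ∈ Finset.univ.filter (fun p : Fin m × Fin m => p.1 < p.2),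
      (1 - XZ (-(eps p.1 + eps p.2))))

/-- `Φ_m = ∏_{1≤i<j≤m} (1 - x_i/x_j) · ∏_{1≤r≤s≤m} (1 - 1/(x_r x_s))`. -/
def phiBig (m : ℕ) : LZ m :=
  (∏ p ∈ Finset.univ.filter (fun p : Fin m × Fin m => p.1 < p.2),
      (1 - XZ (eps p.1 - eps p.2))) *
  (∏ p ∈ Finset.univ.filter (fun p : Fin m × Fin m => p.1 ≤ p.2),
      (1 - XZ (-(eps p.1 + eps p.2))))

/-- The coefficient `a(γ)` of `x^γ` in `φ_m`. -/
def coeffSmall (m : ℕ) (γ : Wt m) : ℤ := (phiSmall m).coeff γ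

/-- The coefficient `A(γ)` of `x^γ` in `Φ_m`. -/
def coeffBig (m : ℕ) (γ : Wt m) : ℤ := (phiBig m).coeff γ

/-- The generic `q`-partition function attached to a finite family `v` of vectors:
the coefficient of `q^d` counts the families `(n_i)` of nonnegative integers with
`Σ n_i = d` and `Σ n_i v_i = β`.  This encodes the coefficient of `x^β` in the formal
series expansion of `∏_i (1 - q x^{v_i})^{-1}` as a power series in `q`. -/
def PqPS {m : ℕ} {ι : Type} [Fintype ι] (v : ι → Wt m) (β : QWt m) : PowerSeries ℤ :=
  PowerSeries.mk fun d =>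
    (Nat.card {n : ι → ℕ // (∑ i, n i) = d ∧ castWt (∑ i, (n i : ℤ) • v i) = β} : ℤ)

/-- The specialization at `q = 1` of `PqPS`: the number of ways to write `β` as a
nonnegative integral combination of the vectors `v_i`. -/
def POne {m : ℕ} {ι : Type} [Fintype ι] (v : ι → Wt m) (β : Wt m) : ℤ :=
  (Nat.card {n : ι → ℕ // (∑ i, (n i : ℤ) • v i) = β} : ℤ)

/-- Index type for the pairs `1 ≤ i < j ≤ m`. -/
abbrev IdxLT (m : ℕ) := {p : Fin m × Fin m // p.1 < p.2}

/-- Index type for the pairs `1 ≤ i ≤ j ≤ m`. -/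
abbrev IdxLE (m : ℕ) := {p : Fin m × Fin m // p.1 ≤ p.2}

/-- The positive roots `ε_i - ε_j` (`i < j`) of type `A_m`. -/
def rootsA (m : ℕ) : IdxLT m → Wt m := fun p => eps p.1.1 - eps p.1.2

/-- The positive roots of type `B_m`. -/
def rootsB (m : ℕ) : IdxLT m ⊕ IdxLT m ⊕ Fin m → Wt m
  | .inl p => eps p.1.1 - eps p.1.2
  | .inr (.inl p) => eps p.1.1 + eps p.1.2
  | .inr (.inr i) => eps i

/-- The positive roots of type `C_m` (note `2ε_i = ε_i + ε_i`). -/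
def rootsC (m : ℕ) : IdxLT m ⊕ IdxLE m → Wt m
  | .inl p => eps p.1.1 - eps p.1.2
  | .inr p => eps p.1.1 + eps p.1.2

/-- The positive roots of type `D_m`. -/
def rootsD (m : ℕ) : IdxLT m ⊕ IdxLT m → Wt m
  | .inl p => eps p.1.1 - eps p.1.2
  | .inr p => eps p.1.1 + eps p.1.2

/-- The vectors `ε_i - ε_j` (`i < j`) and `-(ε_r + ε_s)` (`r < s`), whose `q`-partition
function is `f_q`. -/
def vfSmall (m : ℕ) : IdxLT m ⊕ IdxLT m → Wt m
  | .inl p => eps p.1.1 - eps p.1.2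
  | .inr p => -(eps p.1.1 + eps p.1.2)

/-- The vectors `ε_i - ε_j` (`i < j`) and `-(ε_r + ε_s)` (`r ≤ s`), whose `q`-partition
function is `F_q`. -/
def vfBig (m : ℕ) : IdxLT m ⊕ IdxLE m → Wt m
  | .inl p => eps p.1.1 - eps p.1.2
  | .inr p => -(eps p.1.1 + eps p.1.2)

/-- `f_q`. -/
def fq {m : ℕ} (β : Wt m) : PowerSeries ℤ := PqPS (vfSmall m) (castWt β)

/-- `F_q`. -/
def Fq {m : ℕ} (β : Wt m) : PowerSeries ℤ := PqPS (vfBig m) (castWt β)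

/-- The `q`-analogue of Kostant's partition function, type `A_m`. -/
def PqA {m : ℕ} (β : QWt m) : PowerSeries ℤ := PqPS (rootsA m) β

/-- The `q`-analogue of Kostant's partition function, types `B_m`, `C_m`, `D_m`. -/
def PqG (g : RT) {m : ℕ} (β : QWt m) : PowerSeries ℤ :=
  match g with
  | RT.B => PqPS (rootsB m) β
  | RT.C => PqPS (rootsC m) β
  | RT.D => PqPS (rootsD m) β

/-- The Kostka–Foulkes polynomial
`K^g_{λ,μ}(q) = Σ_{w ∈ W_g} (-1)^{l(w)} P_q^g(w(λ+ρ_g) - (μ+ρ_g))`. -/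
def KF (g : RT) {m : ℕ} (lam mu : QWt m) : PowerSeries ℤ :=
  ∑ σ : Equiv.Perm (Fin m), ∑ ε ∈ Finset.univ.filter (allowed g),
    ssign σ ε • PqG g (sact σ ε (lam + rhoG g m) - (mu + rhoG g m))

/-- The Kostka–Foulkes polynomial of type `A_m`,
`K^{A_m}_{λ,γ}(q) = Σ_{σ ∈ S_m} (-1)^{l(σ)} P_q^{A_m}(σ(λ+ρ_m) - (γ+ρ_m))`,
defined for arbitrary `γ ∈ ℤ^m`. -/
def KFA {m : ℕ} (lam gamma : Wt m) : PowerSeries ℤ :=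
  ∑ σ : Equiv.Perm (Fin m),
    (Equiv.Perm.sign σ : ℤ) • PqA (castWt (pact σ (lam + rhoZ m) - (gamma + rhoZ m)))

/-- `u_{λ,μ}(q) = Σ_{σ ∈ S_m} (-1)^{l(σ)} f_q(σ(λ+ρ_m) - μ - ρ_m)`. -/
def uP {m : ℕ} (lam mu : Wt m) : PowerSeries ℤ :=
  ∑ σ : Equiv.Perm (Fin m),
    (Equiv.Perm.sign σ : ℤ) • fq (pact σ (lam + rhoZ m) - mu - rhoZ m)

/-- `U_{λ,μ}(q) = Σ_{σ ∈ S_m} (-1)^{l(σ)} F_q(σ(λ+ρ_m) - μ - ρ_m)`. -/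
def UP {m : ℕ} (lam mu : Wt m) : PowerSeries ℤ :=
  ∑ σ : Equiv.Perm (Fin m),
    (Equiv.Perm.sign σ : ℤ) • Fq (pact σ (lam + rhoZ m) - mu - rhoZ m)

/-- `f_q` specialized at `q = 1`. -/
def fOne {m : ℕ} (β : Wt m) : ℤ := POne (vfSmall m) β

/-- `F_q` specialized at `q = 1`. -/
def FOne {m : ℕ} (β : Wt m) : ℤ := POne (vfBig m) β

/-- `u_{λ,μ}(1)`. -/
def uP1 {m : ℕ} (lam mu : Wt m) : ℤ :=
  ∑ σ : Equiv.Perm (Fin m),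
    (Equiv.Perm.sign σ : ℤ) * fOne (pact σ (lam + rhoZ m) - mu - rhoZ m)

/-- `U_{λ,μ}(1)`. -/
def UP1 {m : ℕ} (lam mu : Wt m) : ℤ :=
  ∑ σ : Equiv.Perm (Fin m),
    (Equiv.Perm.sign σ : ℤ) * FOne (pact σ (lam + rhoZ m) - mu - rhoZ m)

/-- `λ̂ = (n - λ_m, …, n - λ_1)`. -/
def hatP {m : ℕ} (n : ℤ) (lam : Wt m) : Wt m := fun i => n - lam i.rev

/-- The involution `I(α_1, …, α_m) = (-α_m, …, -α_1)`. -/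
def invI {m : ℕ} (α : Wt m) : Wt m := fun i => -α i.rev

/-- `σ*`, defined by `σ*(k) = σ(m - k + 1)`. -/
def starPerm {m : ℕ} (σ : Equiv.Perm (Fin m)) : Equiv.Perm (Fin m) :=
  (Fin.revPerm).trans σ

/-- The number of ways to write `β = Σ_{1≤r≤s≤m} e_{r,s} (ε_r + ε_s)`, `e_{r,s} ∈ ℕ`. -/
def cC (m : ℕ) (β : Wt m) : ℕ :=
  Nat.card {e : IdxLE m → ℕ // (∑ p, (e p : ℤ) • (eps p.1.1 + eps p.1.2)) = β}

/-- The number of ways to write `β = Σ_{1≤r<s≤m} e_{r,s} (ε_r + ε_s)`, `e_{r,s} ∈ ℕ`. -/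
def cD (m : ℕ) (β : Wt m) : ℕ :=
  Nat.card {e : IdxLT m → ℕ // (∑ p, (e p : ℤ) • (eps p.1.1 + eps p.1.2)) = β}

/-- The set `C_k^m`. -/
def setC (m k : ℕ) : Set (Wt m) :=
  {β | (∃ e : IdxLE m → ℕ, (∑ p, (e p : ℤ) • (eps p.1.1 + eps p.1.2)) = β) ∧
       wtSum β = 2 * k}

/-- The set `D_k^m`. -/
def setD (m k : ℕ) : Set (Wt m) :=
  {β | (∃ e : IdxLT m → ℕ, (∑ p, (e p : ℤ) • (eps p.1.1 + eps p.1.2)) = β) ∧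
       wtSum β = 2 * k}

/-!
A solution of `Σ n_α α = β` over the vectors `ε_i - ε_j`, `-(ε_r + ε_s)` defining `f_q`
(resp. `F_q`) splits into a solution over the positive roots of `A_m` and a family `e` over the
pairs `ε_r + ε_s`. The roots of `A_m` have coordinate sum `0` and each `ε_r + ε_s` has sum `2`,
so `|β| = -2k` forces `Σ e = k`, and grouping by `δ = Σ e_{r,s} (ε_r + ε_s)` gives
`f_q(β) = q^k Σ_δ c_δ P_q^{A_m}(β + δ)`.

The involution `I` permutes the positive roots of `A_m`, so `P_q^{A_m} ∘ I = P_q^{A_m}`; with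
`S_m` conjugated by the reversal `w₀ : i ↦ m + 1 - i`, the alternating sum over `S_m` of
`P_q^{A_m}(σ(λ + ρ_m) - μ - ρ_m + δ)` becomes `K^{A_m}_{λ̂, μ̂ + w₀ δ}`. Finally `δ ↦ w₀ δ`
preserves `C_k^m`, `D_k^m` and `c_δ`.
-/

section WeightSum

variable {m : ℕ}

lemma wtSum_add (a b : Wt m) : wtSum (a + b) = wtSum a + wtSum b :=
  Finset.sum_add_distrib

lemma wtSum_sub (a b : Wt m) : wtSum (a - b) = wtSum a - wtSum b :=
  Finset.sum_sub_distrib _ _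

lemma wtSum_sum_smul {ι : Type} [Fintype ι] (c : ι → ℤ) (v : ι → Wt m) :
    wtSum (∑ i, c i • v i) = ∑ i, c i * wtSum (v i) := by
  simp only [wtSum, Finset.sum_apply, Pi.smul_apply, smul_eq_mul, Finset.mul_sum]
  exact Finset.sum_comm

lemma wtSum_eps (i : Fin m) : wtSum (eps i) = 1 := by
  simp [wtSum, eps]

lemma wtSum_eps_add_eps (i j : Fin m) : wtSum (eps i + eps j) = 2 := by
  rw [wtSum_add, wtSum_eps, wtSum_eps]; norm_num

lemma wtSum_rootsA (p : IdxLT m) : wtSum (rootsA m p) = 0 := by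
  rw [rootsA, wtSum_sub, wtSum_eps, wtSum_eps, sub_self]

lemma wtSum_pact (σ : Equiv.Perm (Fin m)) (α : Wt m) : wtSum (pact σ α) = wtSum α :=
  Equiv.sum_comp σ.symm α

lemma eps_add_eps_nonneg (i j : Fin m) : 0 ≤ eps i + eps j := fun l => by
  simp only [Pi.zero_apply, Pi.add_apply, eps]
  split_ifs <;> norm_num

end WeightSum

section PartitionFunction

variable {m : ℕ} {ι : Type} [Fintype ι]

lemma castWt_injective : Function.Injective (castWt (m := m)) :=
  fun _ _ h => funext fun i => by simpa [castWt] using congrFun h i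

lemma coeff_PqPS (v : ι → Wt m) (β : Wt m) (d : ℕ) :
    PowerSeries.coeff d (PqPS v (castWt β)) =
      Nat.card {n : ι → ℕ // (∑ i, n i) = d ∧ (∑ i, (n i : ℤ) • v i) = β} := by
  rw [PqPS, PowerSeries.coeff_mk]
  exact congrArg _ (Nat.card_congr (Equiv.subtypeEquivRight fun n =>
    and_congr_right fun _ => castWt_injective.eq_iff))

lemma finite_of_sum_eq (d : ℕ) (P : (ι → ℕ) → Prop) :
    Finite {n : ι → ℕ // (∑ i, n i) = d ∧ P n} := by
  classical
  refine Set.Finite.to_subtype ((Set.finite_Iic fun _ => d).subset fun n hn i => ?_)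
  rw [← hn.1]
  exact Finset.single_le_sum (fun j _ => Nat.zero_le (n j)) (Finset.mem_univ i)

end PartitionFunction

lemma Nat.card_eq_sum_card_fiber {α β : Type*} [Finite α] (T : Finset β) (φ : α → β)
    (h : ∀ x, φ x ∈ T) :
    Nat.card α = ∑ b ∈ T, Nat.card {x : α // φ x = b} := by
  classical
  cases nonempty_fintype α
  rw [Nat.card_eq_fintype_card, ← Finset.card_univ,
    Finset.card_eq_sum_card_fiberwise fun x _ => h x]
  exact Finset.sum_congr rfl fun b _ => by rw [Nat.card_eq_fintype_card, Fintype.card_subtype]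

section Splitting

open PowerSeries

variable {m : ℕ} {κ : Type} [Fintype κ] {w : κ → Wt m}

/-- `D_k^m` and `C_k^m` are `natCombs` of the families `ε_r + ε_s` with `r < s`, resp. `r ≤ s`. -/
def natCombs (w : κ → Wt m) (k : ℕ) : Set (Wt m) :=
  {δ | (∃ e : κ → ℕ, ∑ j, (e j : ℤ) • w j = δ) ∧ wtSum δ = 2 * k}

lemma natCombs_finite (hw : ∀ j, 0 ≤ w j) (k : ℕ) : (natCombs w k).Finite := by
  refine (Set.finite_Icc 0 fun _ => 2 * (k : ℤ)).subset ?_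
  rintro δ ⟨⟨e, rfl⟩, hs⟩
  have hnn : 0 ≤ ∑ j, (e j : ℤ) • w j :=
    Finset.sum_nonneg fun j _ => smul_nonneg (Int.natCast_nonneg _) (hw j)
  refine ⟨hnn, fun i => ?_⟩
  rw [← hs]
  exact Finset.single_le_sum (fun j _ => hnn j) (Finset.mem_univ i)

lemma wtSum_lincomb_of_wtSum_eq_two (hw : ∀ j, wtSum (w j) = 2) (e : κ → ℕ) :
    wtSum (∑ j, (e j : ℤ) • w j) = 2 * ∑ j, (e j : ℤ) := by
  rw [wtSum_sum_smul, Finset.mul_sum]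
  exact Finset.sum_congr rfl fun j _ => by rw [hw, mul_comm]

lemma sum_eq_of_wtSum_lincomb (hw : ∀ j, wtSum (w j) = 2) {e : κ → ℕ} {k : ℕ}
    (h : wtSum (∑ j, (e j : ℤ) • w j) = 2 * k) : ∑ j, e j = k := by
  rw [wtSum_lincomb_of_wtSum_eq_two hw] at h
  have : ∑ j, (e j : ℤ) = k := by linarith
  exact_mod_cast this

lemma lincomb_sumElim (n : IdxLT m ⊕ κ → ℕ) :
    ∑ i, (n i : ℤ) • Sum.elim (rootsA m) (-w) i =
      ∑ p, (n (.inl p) : ℤ) • rootsA m p - ∑ j, (n (.inr j) : ℤ) • w j := by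
  simp [Fintype.sum_sum_type, sub_eq_add_neg]

lemma sum_inr_eq_of_lincomb_sumElim (hw : ∀ j, wtSum (w j) = 2) {β : Wt m} {k : ℕ}
    (hβ : wtSum β = -(2 * k)) {n : IdxLT m ⊕ κ → ℕ}
    (hn : ∑ i, (n i : ℤ) • Sum.elim (rootsA m) (-w) i = β) :
    ∑ j, n (.inr j) = k := by
  apply sum_eq_of_wtSum_lincomb hw
  have h := congrArg wtSum hn
  rw [lincomb_sumElim, wtSum_sub, wtSum_sum_smul, hβ] at h
  simp only [wtSum_rootsA, mul_zero, Finset.sum_const_zero, zero_sub] at h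
  linarith

lemma card_fiber_lincomb_sumElim (hw : ∀ j, wtSum (w j) = 2) {β δ : Wt m} {k d : ℕ}
    (hkd : k ≤ d) (hδ : wtSum δ = 2 * k) :
    Nat.card {x : {n : IdxLT m ⊕ κ → ℕ //
          (∑ i, n i) = d ∧ ∑ i, (n i : ℤ) • Sum.elim (rootsA m) (-w) i = β} //
        ∑ j, (x.1 (.inr j) : ℤ) • w j = δ} =
      Nat.card {e : κ → ℕ // ∑ j, (e j : ℤ) • w j = δ} *
        Nat.card {a : IdxLT m → ℕ //
          (∑ p, a p) = d - k ∧ ∑ p, (a p : ℤ) • rootsA m p = β + δ} := by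
  rw [← Nat.card_prod]
  refine Nat.card_congr
    { toFun := fun x => (⟨fun j => x.1.1 (.inr j), x.2⟩, ⟨fun p => x.1.1 (.inl p), ?_, ?_⟩)
      invFun := fun y => ⟨⟨Sum.elim y.2.1 y.1.1, ?_, ?_⟩, y.1.2⟩
      left_inv := fun x => Subtype.ext (Subtype.ext (Sum.elim_comp_inl_inr x.1.1))
      right_inv := fun y => rfl }
  · have hx := x.1.2.1
    have hk : ∑ j, x.1.1 (.inr j) = k := sum_eq_of_wtSum_lincomb hw (by rw [x.2, hδ])
    rw [Fintype.sum_sum_type] at hx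
    show ∑ p, x.1.1 (.inl p) = d - k
    omega
  · have hx := x.1.2.2
    rw [lincomb_sumElim, x.2] at hx
    exact eq_add_of_sub_eq hx
  · have hk : ∑ j, y.1.1 j = k := sum_eq_of_wtSum_lincomb hw (by rw [y.1.2, hδ])
    simp only [Fintype.sum_sum_type, Sum.elim_inl, Sum.elim_inr, y.2.2.1, hk]
    omega
  · rw [lincomb_sumElim]
    simp only [Sum.elim_inl, Sum.elim_inr, y.2.2.2, y.1.2]
    abel

theorem PqPS_sumElim_rootsA_neg (hw : ∀ j, wtSum (w j) = 2) (hw0 : ∀ j, 0 ≤ w j)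
    {β : Wt m} {k : ℕ} (hβ : wtSum β = -(2 * k)) :
    PqPS (Sum.elim (rootsA m) (-w)) (castWt β) =
      X ^ k * ∑ δ ∈ (natCombs_finite hw0 k).toFinset, POne w δ • PqA (castWt (β + δ)) := by
  ext d
  rw [coeff_X_pow_mul', coeff_PqPS]
  split_ifs with hkd
  · have := finite_of_sum_eq d fun n => ∑ i, (n i : ℤ) • Sum.elim (rootsA m) (-w) i = β
    rw [Nat.card_eq_sum_card_fiber _ (fun x => ∑ j, (x.1 (.inr j) : ℤ) • w j) fun x =>
        (natCombs_finite hw0 k).mem_toFinset.mpr ⟨⟨_, rfl⟩, by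
          rw [wtSum_lincomb_of_wtSum_eq_two hw, ← sum_inr_eq_of_lincomb_sumElim hw hβ x.2.2]
          push_cast; rfl⟩,
      map_sum, Nat.cast_sum]
    refine Finset.sum_congr rfl fun δ hδ => ?_
    rw [card_fiber_lincomb_sumElim hw hkd ((natCombs_finite hw0 k).mem_toFinset.mp hδ).2,
      map_zsmul, PqA, coeff_PqPS, POne, Nat.cast_mul, smul_eq_mul]
  · rw [Nat.cast_eq_zero, Nat.card_eq_zero]
    refine Or.inl ⟨fun ⟨n, hd, hn⟩ => hkd ?_⟩
    have hk := sum_inr_eq_of_lincomb_sumElim hw hβ hn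
    rw [Fintype.sum_sum_type] at hd
    omega

end Splitting

section Relabel

variable {m : ℕ} {κ : Type} [Fintype κ] {v : κ → Wt m} (L : Wt m ≃+ Wt m) {π : Equiv.Perm κ}

lemma lincomb_comp_symm (hπ : ∀ j, v (π j) = L (v j)) (e : κ → ℕ) :
    ∑ j, (e (π.symm j) : ℤ) • v j = L (∑ j, (e j : ℤ) • v j) := by
  rw [map_sum, ← Equiv.sum_comp π]
  simp only [Equiv.symm_apply_apply, hπ, map_zsmul]

def lincombRelabel (hπ : ∀ j, v (π j) = L (v j)) (P : (κ → ℕ) → Prop)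
    (hP : ∀ e, P e ↔ P (e ∘ π.symm)) (β : Wt m) :
    {e : κ → ℕ // P e ∧ ∑ j, (e j : ℤ) • v j = β} ≃
      {e : κ → ℕ // P e ∧ ∑ j, (e j : ℤ) • v j = L β} :=
  Equiv.subtypeEquiv (π.arrowCongr (Equiv.refl ℕ)) fun e => and_congr (hP e) <| by
    change _ ↔ ∑ j, (e (π.symm j) : ℤ) • v j = L β
    rw [lincomb_comp_symm L hπ, L.injective.eq_iff]

lemma POne_map (hπ : ∀ j, v (π j) = L (v j)) (β : Wt m) : POne v (L β) = POne v β := by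
  have := Nat.card_congr (lincombRelabel L hπ (fun _ => True) (fun _ => Iff.rfl) β)
  simpa [POne] using this.symm

lemma PqPS_castWt_map (hπ : ∀ j, v (π j) = L (v j)) (β : Wt m) :
    PqPS v (castWt (L β)) = PqPS v (castWt β) := by
  ext d
  rw [coeff_PqPS, coeff_PqPS]
  exact congrArg _ (Nat.card_congr (lincombRelabel L hπ (fun e => ∑ j, e j = d)
    (fun e => by rw [Function.comp_def, Equiv.sum_comp]) β).symm)

end Relabel

section Reversal

variable {m : ℕ}

def revW (m : ℕ) : Wt m ≃+ Wt m :=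
  (LinearEquiv.funCongrLeft ℤ ℤ (Fin.revPerm : Fin m ≃ Fin m)).toAddEquiv

@[simp]
lemma revW_apply (α : Wt m) (i : Fin m) : revW m α i = α i.rev := rfl

lemma revW_revW (α : Wt m) : revW m (revW m α) = α := by
  ext i; simp

lemma wtSum_revW (α : Wt m) : wtSum (revW m α) = wtSum α :=
  Equiv.sum_comp Fin.revPerm α

lemma revW_eps (i : Fin m) : revW m (eps i) = eps i.rev := by
  ext j; simp [eps, Fin.rev_eq_iff]

def pairRevLT (m : ℕ) : Equiv.Perm (IdxLT m) :=
  Function.Involutive.toPerm (fun p => ⟨(p.1.2.rev, p.1.1.rev), Fin.rev_lt_rev.mpr p.2⟩)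
    fun p => by simp

def pairRevLE (m : ℕ) : Equiv.Perm (IdxLE m) :=
  Function.Involutive.toPerm (fun p => ⟨(p.1.2.rev, p.1.1.rev), Fin.rev_le_rev.mpr p.2⟩)
    fun p => by simp

lemma revW_eps_add_eps (i j : Fin m) : revW m (eps i + eps j) = eps j.rev + eps i.rev := by
  rw [map_add, revW_eps, revW_eps, add_comm]

lemma rootsA_pairRevLT (p : IdxLT m) :
    rootsA m (pairRevLT m p) = ((revW m).trans (AddEquiv.neg (Wt m))) (rootsA m p) := by
  show eps p.1.2.rev - eps p.1.1.rev = -revW m (eps p.1.1 - eps p.1.2)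
  rw [map_sub, revW_eps, revW_eps, neg_sub]

lemma PqA_castWt_invI (γ : Wt m) : PqA (castWt (invI γ)) = PqA (castWt γ) :=
  PqPS_castWt_map ((revW m).trans (AddEquiv.neg (Wt m))) rootsA_pairRevLT γ

lemma revW_mem_natCombs {κ : Type} [Fintype κ] {w : κ → Wt m} {π : Equiv.Perm κ}
    (hπ : ∀ j, w (π j) = revW m (w j)) {k : ℕ} {δ : Wt m} (hδ : δ ∈ natCombs w k) :
    revW m δ ∈ natCombs w k := by
  obtain ⟨⟨e, rfl⟩, hs⟩ := hδ
  exact ⟨⟨_, lincomb_comp_symm (revW m) hπ e⟩, by rwa [wtSum_revW]⟩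

end Reversal

section KostkaFoulkes

open PowerSeries

variable {m : ℕ}

lemma pact_permCongr_hatP (lam mu δ : Wt m) (n : ℤ) (σ : Equiv.Perm (Fin m)) :
    pact (Fin.revPerm.permCongr σ) (hatP n lam + rhoZ m) - (hatP n mu + revW m δ + rhoZ m) =
      invI (pact σ (lam + rhoZ m) - mu - rhoZ m + δ) := by
  ext i
  have hrev : ∀ j : Fin m, ((j.rev : ℕ) : ℤ) = m - 1 - j := fun j => by
    have := j.isLt
    rw [Fin.val_rev]
    omega
  have hσ : (Fin.revPerm.permCongr σ).symm i = (σ.symm i.rev).rev := rfl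
  simp only [pact, invI, hatP, rhoZ, Function.comp_apply, Pi.add_apply, Pi.sub_apply, revW_apply,
    hσ, Fin.rev_rev, hrev]
  ring

lemma KFA_hatP_add_revW (lam mu δ : Wt m) (n : ℤ) :
    KFA (hatP n lam) (hatP n mu + revW m δ) =
      ∑ σ : Equiv.Perm (Fin m), (Equiv.Perm.sign σ : ℤ) •
        PqA (castWt (pact σ (lam + rhoZ m) - mu - rhoZ m + δ)) :=
  (Fintype.sum_equiv Fin.revPerm.permCongr _ _ fun σ => by
    rw [Equiv.Perm.sign_permCongr, pact_permCongr_hatP, PqA_castWt_invI]).symm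

theorem sum_sign_smul_PqPS_sumElim {κ : Type} [Fintype κ] {w : κ → Wt m}
    (hw : ∀ j, wtSum (w j) = 2) (hw0 : ∀ j, 0 ≤ w j) {π : Equiv.Perm κ}
    (hπ : ∀ j, w (π j) = revW m (w j)) (lam mu : Wt m) {k : ℕ}
    (hk : wtSum mu - wtSum lam = 2 * k) (n : ℤ) :
    ∑ σ : Equiv.Perm (Fin m), (Equiv.Perm.sign σ : ℤ) •
        PqPS (Sum.elim (rootsA m) (-w)) (castWt (pact σ (lam + rhoZ m) - mu - rhoZ m)) =
      ∑ᶠ δ ∈ natCombs w k, POne w δ • (X ^ k * KFA (hatP n lam) (hatP n mu + δ)) := by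
  have hS := natCombs_finite hw0 k
  have hβ (σ : Equiv.Perm (Fin m)) :
      wtSum (pact σ (lam + rhoZ m) - mu - rhoZ m) = -(2 * k) := by
    rw [wtSum_sub, wtSum_sub, wtSum_pact, wtSum_add]
    linarith
  have hbij : Set.BijOn (revW m) (natCombs w k) (natCombs w k) :=
    Set.InvOn.bijOn ⟨fun δ _ => revW_revW δ, fun δ _ => revW_revW δ⟩
      (fun _ => revW_mem_natCombs hπ) (fun _ => revW_mem_natCombs hπ)
  calc _ = ∑ δ ∈ hS.toFinset,
          POne w δ • (X ^ k * KFA (hatP n lam) (hatP n mu + revW m δ)) := by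
        simp only [PqPS_sumElim_rootsA_neg hw hw0 (hβ _), KFA_hatP_add_revW, Finset.mul_sum,
          Finset.smul_sum, mul_smul_comm]
        rw [Finset.sum_comm]
        exact Finset.sum_congr rfl fun _ _ => Finset.sum_congr rfl fun _ _ => smul_comm _ _ _
    _ = ∑ᶠ δ ∈ natCombs w k,
          POne w δ • (X ^ k * KFA (hatP n lam) (hatP n mu + revW m δ)) :=
        (finsum_mem_eq_finite_toFinset_sum _ hS).symm
    _ = _ := finsum_mem_eq_of_bijOn (revW m) hbij fun δ _ => by rw [POne_map (revW m) hπ]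

end KostkaFoulkes

theorem stmt19_general (m : ℕ) (lam mu : Wt m) (k : ℕ) (hk : wtSum mu - wtSum lam = 2 * k) (n : ℤ) :
    uP lam mu =
      ∑ᶠ δ ∈ setD m k,
        (cD m δ : ℤ) •
          ((PowerSeries.X : PowerSeries ℤ) ^ k * KFA (hatP n lam) (hatP n mu + δ)) ∧
    UP lam mu =
      ∑ᶠ δ ∈ setC m k,
        (cC m δ : ℤ) •
          ((PowerSeries.X : PowerSeries ℤ) ^ k * KFA (hatP n lam) (hatP n mu + δ)) := by
  have hD : vfSmall m = Sum.elim (rootsA m) (-fun p : IdxLT m => eps p.1.1 + eps p.1.2) := by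
    funext i; cases i <;> rfl
  have hC : vfBig m = Sum.elim (rootsA m) (-fun p : IdxLE m => eps p.1.1 + eps p.1.2) := by
    funext i; cases i <;> rfl
  constructor
  · simp only [uP, fq, hD]
    exact sum_sign_smul_PqPS_sumElim (fun _ => wtSum_eps_add_eps _ _)
      (fun _ => eps_add_eps_nonneg _ _) (π := pairRevLT m)
      (fun _ => (revW_eps_add_eps _ _).symm) lam mu hk n
  · simp only [UP, Fq, hC]
    exact sum_sign_smul_PqPS_sumElim (fun _ => wtSum_eps_add_eps _ _)
      (fun _ => eps_add_eps_nonneg _ _) (π := pairRevLE m)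
      (fun _ => (revW_eps_add_eps _ _).symm) lam mu hk n

/-- For partitions `λ, μ` of length `m` with `|μ| - |λ| = 2k`,
`n = max(λ_1, μ_1)`, `λ̂ = (n-λ_m,…,n-λ_1)` and `μ̂ = (n-μ_m,…,n-μ_1)`:
`u_{λ,μ}(q) = Σ_{δ∈D_k^m} c_δ^{D_m} q^k K^{A_m}_{λ̂,μ̂+δ}(q)` and
`U_{λ,μ}(q) = Σ_{δ∈C_k^m} c_δ^{C_m} q^k K^{A_m}_{λ̂,μ̂+δ}(q)`. -/
theorem stmt19 (m : ℕ) (hm : 1 ≤ m) (lam mu : Wt m) (hlam : IsPart lam) (hmu : IsPart mu)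
    (k : ℕ) (hk : wtSum mu - wtSum lam = 2 * k)
    (n : ℤ) (hn : n = max (lam ⟨0, hm⟩) (mu ⟨0, hm⟩)) :
    uP lam mu =
      ∑ᶠ δ ∈ setD m k,
        (cD m δ : ℤ) •
          ((PowerSeries.X : PowerSeries ℤ) ^ k * KFA (hatP n lam) (hatP n mu + δ)) ∧
    UP lam mu =
      ∑ᶠ δ ∈ setC m k,
        (cC m δ : ℤ) •
          ((PowerSeries.X : PowerSeries ℤ) ^ k * KFA (hatP n lam) (hatP n mu + δ)) :=
  stmt19_general m lam mu k hk n
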